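/- arXiv:1510.08274 — 4 statements merged into one kernel-verified Lean document; each statement's English description precedes it below -/
import Mathlib

section
/- In the ordering gadget, in any simultaneous level drawing without crossings of the two graphs G1 and G2 (where each level is a horizontal line and drawings are determined by linear orders on level 1 and level 2), if u_{1,1},…,u_{1,n} appear in this left-to-right order on level 1, then for every i = 1,…,k the vertices u_{i,1},…,u_{i,n} appear in this left-to-right order on level 1, and for every i = 1,…,k−1 the vertices v_{i,1},…,v_{i,n} appear in this left-to-right order on level 2. -/
/-- Two edges `(a,b)` and `(a',b')` between two levels cross. -/
def Cross (a b a' b' : ℝ) : Prop := (a < a' ∧ b' < b) ∨ (a' < a ∧ b < b')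

/-- in any crossing-free simultaneous level drawing of the ordering gadget
`(G1, G2)` (positions `σu i j` of `u_{i,j}` on level 1 and `σv i j` of `v_{i,j}` on level 2,
indices 0-based), if `u_{0,0},…,u_{0,n-1}` appear in this left-to-right order on level 1,
then for every `i < k` the vertices `u_{i,0},…,u_{i,n-1}` appear in this left-to-right order
on level 1, and for every `i < k-1` the vertices `v_{i,0},…,v_{i,n-1}` appear in this
left-to-right order on level 2. -/
theorem ordering_gadget_order
    (n k : ℕ) (hk : 0 < k)
    (σu σv : ℕ → ℕ → ℝ)
    (hinjU : ∀ i j i' j', i < k → j < n → i' < k → j' < n →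
      σu i j = σu i' j' → (i, j) = (i', j'))
    (hinjV : ∀ i j i' j', i < k - 1 → j < n → i' < k - 1 → j' < n →
      σv i j = σv i' j' → (i, j) = (i', j'))
    -- G1 has edges (u_{i,j}, v_{i,j}); no two of them cross
    (hG1 : ∀ i j i' j', i < k - 1 → j < n → i' < k - 1 → j' < n →
      ¬ Cross (σu i j) (σv i j) (σu i' j') (σv i' j'))
    -- G2 has edges (u_{i+1,j}, v_{i,j}); no two of them cross
    (hG2 : ∀ i j i' j', i < k - 1 → j < n → i' < k - 1 → j' < n →
      ¬ Cross (σu (i + 1) j) (σv i j) (σu (i' + 1) j') (σv i' j'))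
    (hbase : ∀ j j', j < j' → j' < n → σu 0 j < σu 0 j') :
    (∀ i j j', i < k → j < j' → j' < n → σu i j < σu i j') ∧
    (∀ i j j', i < k - 1 → j < j' → j' < n → σv i j < σv i j') := by
  have keyV : ∀ i, i < k - 1 → (∀ j j', j < j' → j' < n → σu i j < σu i j') →
      ∀ j j', j < j' → j' < n → σv i j < σv i j' := by
    intro i hik hu j j' hjj hj'
    have hjn : j < n := lt_trans hjj hj'
    have hcr := hG1 i j i j' hik hjn hik hj'
    have hne : σv i j ≠ σv i j' := by
      intro h
      have := hinjV i j i j' hik hjn hik hj' h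
      simp only [Prod.mk.injEq] at this
      omega
    unfold Cross at hcr
    push_neg at hcr
    have := hcr.1 (hu j j' hjj hj')
    cases lt_or_ge (σv i j) (σv i j') with
    | inl h => exact h
    | inr h => exact absurd (lt_of_le_of_ne h (Ne.symm hne)) (by linarith)
  have keyU : ∀ i, i < k → ∀ j j', j < j' → j' < n → σu i j < σu i j' := by
    intro i
    induction i with
    | zero => exact fun _ j j' h h' => hbase j j' h h'
    | succ i ih =>
      intro hik j j' hjj hj'
      have hik' : i < k - 1 := by omega
      have hv := keyV i hik' (ih (by omega)) j j' hjj hj'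
      have hjn : j < n := lt_trans hjj hj'
      have hcr := hG2 i j i j' hik' hjn hik' hj'
      have hne : σu (i + 1) j ≠ σu (i + 1) j' := by
        intro h
        have := hinjU (i+1) j (i+1) j' hik hjn hik hj' h
        simp only [Prod.mk.injEq] at this
        omega
      unfold Cross at hcr
      push_neg at hcr
      have := hcr.2
      cases lt_or_ge (σu (i+1) j) (σu (i+1) j') with
      | inl h => exact h
      | inr h =>
        have h2 := lt_of_le_of_ne h (Ne.symm hne)
        exact absurd hv (by linarith [this h2])
  exact ⟨fun i j j' hik => keyU i hik j j',
    fun i j j' hik => keyV i hik (keyU i (by omega)) j j'⟩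
end

section
/- In any crossing-free level drawing of the triplet gadget path T = (w1, w2, w3, w4, w5), where w1, w3, w5 lie on level l_i and w2, w4 lie on level l_j (j ≠ i), the vertex w3 lies between w1 and w5 in the linear order along level l_i; that is, either w1 < w3 < w5 or w5 < w3 < w1. -/
/-- in any crossing-free level drawing of the triplet gadget, the path
`(w1,w2,w3,w4,w5)` with `w1,w3,w5` at positions `a1,a3,a5` on level `l_i` and `w2,w4`
at positions `b2,b4` on level `l_j`, vertex `w3` lies between `w1` and `w5` on `l_i`. -/
theorem triplet_gadget_between
    (a1 a3 a5 b2 b4 : ℝ)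
    (h13 : a1 ≠ a3) (h35 : a3 ≠ a5) (h15 : a1 ≠ a5) (hb : b2 ≠ b4)
    -- the four edges of the path, written as (level-i endpoint, level-j endpoint):
    -- e1 = (a1,b2), e2 = (a3,b2), e3 = (a3,b4), e4 = (a5,b4); no two of them cross
    (h12 : ¬ Cross a1 b2 a3 b2) (h13' : ¬ Cross a1 b2 a3 b4) (h14 : ¬ Cross a1 b2 a5 b4)
    (h23 : ¬ Cross a3 b2 a3 b4) (h24 : ¬ Cross a3 b2 a5 b4) (h34 : ¬ Cross a3 b4 a5 b4) :
    (a1 < a3 ∧ a3 < a5) ∨ (a5 < a3 ∧ a3 < a1) := by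
  simp only [Cross, not_or, not_and, not_lt] at h13' h24
  rcases h13.lt_or_gt with h|h <;> rcases h35.lt_or_gt with h2|h2
  · exact Or.inl ⟨h, h2⟩
  · exact absurd (le_antisymm (h24.2 h2) (h13'.1 h)) hb.symm
  · exact absurd (le_antisymm (h13'.2 h) (h24.1 h2)) hb.symm
  · exact Or.inr ⟨h2, h⟩
end

section
/- Let S = {s_1,…,s_n} and let X be a set of ordered triplets of distinct elements of S. Construct the instance consisting of the ordering gadget (G1, G2) on levels l_1, l_2 with k = |X|, together with a third graph G3 consisting, for each triplet (s_{a_i}, s_{b_i}, s_{c_i}) ∈ X, of a triplet gadget T_i = (u_{i,a_i}, x_i, u_{i,b_i}, y_i, u_{i,c_i}), where x_i, y_i are new distinct vertices on level l_2. Then there exist linear orders on the vertices of level l_1 and of level l_2 such that no two edges of the same graph (G1, G2, or G3) cross, if and only if there exists a linear order ≺ on S such that for every (α, β, γ) ∈ X, either α ≺ β ≺ γ or γ ≺ β ≺ α. -/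
/-- Level-1 endpoint of the `q`-th edge (`q < 4`) of the `i`-th triplet gadget
`T_i = (u_{i,a i}, x_i, u_{i,b i}, y_i, u_{i,c i})`. -/
def tripL (σu : ℕ → ℕ → ℝ) (a b c : ℕ → ℕ) (i q : ℕ) : ℝ :=
  if q = 0 then σu i (a i) else if q = 1 then σu i (b i)
  else if q = 2 then σu i (b i) else σu i (c i)

/-- Level-2 endpoint of the `q`-th edge of the `i`-th triplet gadget. -/
def tripR (σx σy : ℕ → ℝ) (i q : ℕ) : ℝ :=
  if q ≤ 1 then σx i else σy i

open Set Real

/-! Forward direction: a crossing-free matching between two injectively placed rows makes the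
two rows induce the same order, so the ordering gadget forces every row `u_{i,·}` into the order
of row `u_{0,·}`, which serves as the Betweenness order. In the triplet gadget the edges at `x_i`
and `y_i` force both pairs `(u_{i,a}, u_{i,b})` and `(u_{i,b}, u_{i,c})` into the order of
`(x_i, y_i)`, so `b` lies between `a` and `c`.

Backward direction: put `u_{i,j}` and `v_{i,j}` at `i + sigmoid (p j)`, and `x_i`, `y_i` at the
offsets of `u_{i,a}` and `u_{i,c}` in a block `k + i` beyond all of level 2. Along each triplet
gadget both endpoints of its edges move monotonically, and distinct blocks are separated, so no
edges cross. -/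

lemma cross_comm {a b a' b' : ℝ} : Cross a b a' b' ↔ Cross a' b' a b := or_comm

lemma lt_iff_lt_of_not_cross {a b a' b' : ℝ} (h : ¬Cross a b a' b') (ha : a ≠ a')
    (hb : b ≠ b') : a < a' ↔ b < b' :=
  ⟨fun hlt => (not_lt.1 fun h' => h (Or.inl ⟨hlt, h'⟩)).lt_of_ne hb,
    fun hlt => ha.lt_of_le (not_lt.1 fun h' => h (Or.inr ⟨h', hlt⟩))⟩

lemma not_cross_of_lt_of_lt {a b a' b' : ℝ} (ha : a < a') (hb : b < b') : ¬Cross a b a' b' := by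
  rintro (⟨-, h⟩ | ⟨h, -⟩)
  · exact h.not_gt hb
  · exact h.not_gt ha

lemma not_cross_of_monotone {α : Type*} [LinearOrder α] {L R : α → ℝ} (hL : Monotone L)
    (hR : Monotone R) (s t : α) : ¬Cross (L s) (R s) (L t) (R t) := by
  rintro (⟨hl, hr⟩ | ⟨hl, hr⟩)
  · exact hr.not_ge (hR (hL.reflect_lt hl).le)
  · exact hr.not_ge (hR (hL.reflect_lt hl).le)

lemma lt_iff_lt_of_forall_not_cross {ι : Type*} {s : Set ι} {f g : ι → ℝ} (hf : s.InjOn f)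
    (hg : s.InjOn g) (h : ∀ j ∈ s, ∀ j' ∈ s, ¬Cross (f j) (g j) (f j') (g j')) {j j' : ι}
    (hj : j ∈ s) (hj' : j' ∈ s) : f j < f j' ↔ g j < g j' := by
  obtain rfl | hne := eq_or_ne j j'
  · exact iff_of_false (lt_irrefl _) (lt_irrefl _)
  · exact lt_iff_lt_of_not_cross (h j hj j' hj') (hf.ne hj hj' hne) (hg.ne hj hj' hne)

lemma ordering_gadget_lt_iff {n k : ℕ} {σu σv : ℕ → ℕ → ℝ}
    (hu : ∀ i < k, (Iio n).InjOn (σu i)) (hv : ∀ i < k - 1, (Iio n).InjOn (σv i))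
    (hG1 : ∀ i < k - 1, ∀ j < n, ∀ j' < n, ¬Cross (σu i j) (σv i j) (σu i j') (σv i j'))
    (hG2 : ∀ i < k - 1, ∀ j < n, ∀ j' < n,
      ¬Cross (σu (i + 1) j) (σv i j) (σu (i + 1) j') (σv i j')) :
    ∀ i < k, ∀ j < n, ∀ j' < n, σu i j < σu i j' ↔ σu 0 j < σu 0 j' := by
  intro i
  induction i with
  | zero => exact fun _ _ _ _ _ => Iff.rfl
  | succ i ih =>
    intro hi j hj j' hj'
    have hi' : i < k - 1 := by omega
    rw [lt_iff_lt_of_forall_not_cross (hu (i + 1) hi) (hv i hi') (hG2 i hi') hj hj',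
      ← lt_iff_lt_of_forall_not_cross (hu i (by omega)) (hv i hi') (hG1 i hi') hj hj']
    exact ih (by omega) j hj j' hj'

lemma between_of_not_cross {ua ub uc x y : ℝ} (hab : ua ≠ ub) (hbc : ub ≠ uc) (hxy : x ≠ y)
    (h₁ : ¬Cross ua x ub y) (h₂ : ¬Cross ub x uc y) :
    (ua < ub ∧ ub < uc) ∨ (uc < ub ∧ ub < ua) := by
  rcases hxy.lt_or_gt with hlt | hlt
  · exact .inl ⟨(lt_iff_lt_of_not_cross h₁ hab hxy).2 hlt,
      (lt_iff_lt_of_not_cross h₂ hbc hxy).2 hlt⟩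
  · exact .inr ⟨(lt_iff_lt_of_not_cross (cross_comm.not.1 h₂) hbc.symm hxy.symm).2 hlt,
      (lt_iff_lt_of_not_cross (cross_comm.not.1 h₁) hab.symm hxy.symm).2 hlt⟩

noncomputable def blockPos (i : ℕ) (t : ℝ) : ℝ := i + sigmoid t

lemma blockPos_lt_blockPos_of_lt {i i' : ℕ} (h : i < i') (t t' : ℝ) :
    blockPos i t < blockPos i' t' := by
  have : (i : ℝ) + 1 ≤ i' := by exact_mod_cast h
  unfold blockPos
  linarith [sigmoid_lt_one t, sigmoid_pos t']

lemma blockPos_strictMono (i : ℕ) : StrictMono (blockPos i) :=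
  fun _ _ h => add_lt_add_right (sigmoid_strictMono h) _

lemma blockPos_inj {i i' : ℕ} {t t' : ℝ} :
    blockPos i t = blockPos i' t' ↔ i = i' ∧ t = t' := by
  refine ⟨fun h => ?_, by rintro ⟨rfl, rfl⟩; rfl⟩
  obtain rfl : i = i' := by
    by_contra hne
    rcases Nat.lt_or_gt_of_ne hne with hlt | hlt
    · exact (blockPos_lt_blockPos_of_lt hlt t t').ne h
    · exact (blockPos_lt_blockPos_of_lt hlt t' t).ne' h
  exact ⟨rfl, sigmoid_injective (add_left_cancel h)⟩

lemma prod_eq_of_blockPos_eq {s : Set ℕ} {p : ℕ → ℝ} (hp : s.InjOn p) {i i' j j' : ℕ}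
    (hj : j ∈ s) (hj' : j' ∈ s) (h : blockPos i (p j) = blockPos i' (p j')) :
    (i, j) = (i', j') := by
  obtain ⟨rfl, ht⟩ := blockPos_inj.1 h
  rw [hp hj hj' ht]

lemma blockPos_succ (i : ℕ) (t : ℝ) : blockPos (i + 1) t = blockPos i t + 1 := by
  simp only [blockPos, Nat.cast_succ]
  ring

lemma exists_tripL_eq (σu : ℕ → ℕ → ℝ) (a b c : ℕ → ℕ) (i q : ℕ) :
    ∃ j, tripL σu a b c i q = σu i j := by
  unfold tripL
  split_ifs <;> exact ⟨_, rfl⟩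

lemma exists_tripR_eq (F : ℕ → ℝ → ℝ) (f g : ℕ → ℝ) (i q : ℕ) :
    ∃ t, tripR (fun i => F i (f i)) (fun i => F i (g i)) i q = F i t := by
  unfold tripR
  split_ifs <;> exact ⟨_, rfl⟩

section TripletGadget

variable {σu : ℕ → ℕ → ℝ} {a b c : ℕ → ℕ} {i : ℕ}

lemma tripL_monotone (h₁ : σu i (a i) ≤ σu i (b i)) (h₂ : σu i (b i) ≤ σu i (c i)) :
    Monotone (tripL σu a b c i) :=
  monotone_nat_of_le_succ fun q => by rcases q with _ | _ | _ | q <;> simp [tripL, h₁, h₂]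

lemma tripL_antitone (h₁ : σu i (b i) ≤ σu i (a i)) (h₂ : σu i (c i) ≤ σu i (b i)) :
    Antitone (tripL σu a b c i) :=
  antitone_nat_of_succ_le fun q => by rcases q with _ | _ | _ | q <;> simp [tripL, h₁, h₂]

lemma tripR_monotone {σx σy : ℕ → ℝ} (h : σx i ≤ σy i) : Monotone (tripR σx σy i) :=
  monotone_nat_of_le_succ fun q => by rcases q with _ | _ | q <;> simp [tripR, h]

lemma tripR_antitone {σx σy : ℕ → ℝ} (h : σy i ≤ σx i) : Antitone (tripR σx σy i) :=
  antitone_nat_of_succ_le fun q => by rcases q with _ | _ | q <;> simp [tripR, h]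

end TripletGadget

section BlockLayout

variable {p : ℕ → ℝ} {a b c : ℕ → ℕ} {m : ℕ}

lemma not_cross_blockPos_triplets_of_lt {i i' : ℕ} (h : i < i') (q q' : ℕ) :
    ¬Cross (tripL (fun i j => blockPos i (p j)) a b c i q)
      (tripR (fun i => blockPos (m + i) (p (a i))) (fun i => blockPos (m + i) (p (c i))) i q)
      (tripL (fun i j => blockPos i (p j)) a b c i' q')
      (tripR (fun i => blockPos (m + i) (p (a i))) (fun i => blockPos (m + i) (p (c i)))
        i' q') := by
  obtain ⟨j, hj⟩ := exists_tripL_eq (fun i j => blockPos i (p j)) a b c i q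
  obtain ⟨j', hj'⟩ := exists_tripL_eq (fun i j => blockPos i (p j)) a b c i' q'
  obtain ⟨t, ht⟩ :=
    exists_tripR_eq (fun i => blockPos (m + i)) (fun i => p (a i)) (fun i => p (c i)) i q
  obtain ⟨t', ht'⟩ :=
    exists_tripR_eq (fun i => blockPos (m + i)) (fun i => p (a i)) (fun i => p (c i)) i' q'
  rw [hj, hj', ht, ht']
  exact not_cross_of_lt_of_lt (blockPos_lt_blockPos_of_lt h _ _)
    (blockPos_lt_blockPos_of_lt (by omega) _ _)

lemma not_cross_blockPos_triplet {i : ℕ}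
    (hbet : (p (a i) < p (b i) ∧ p (b i) < p (c i)) ∨ (p (c i) < p (b i) ∧ p (b i) < p (a i)))
    (q q' : ℕ) :
    ¬Cross (tripL (fun i j => blockPos i (p j)) a b c i q)
      (tripR (fun i => blockPos (m + i) (p (a i))) (fun i => blockPos (m + i) (p (c i))) i q)
      (tripL (fun i j => blockPos i (p j)) a b c i q')
      (tripR (fun i => blockPos (m + i) (p (a i))) (fun i => blockPos (m + i) (p (c i))) i q') := by
  have hmono (i : ℕ) := (blockPos_strictMono i).monotone
  rcases hbet with ⟨hab, hbc⟩ | ⟨hcb, hba⟩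
  · exact not_cross_of_monotone (tripL_monotone (hmono i hab.le) (hmono i hbc.le))
      (tripR_monotone (hmono _ (hab.trans hbc).le)) q q'
  · exact not_cross_of_monotone (tripL_antitone (hmono i hba.le) (hmono i hcb.le)).dual_left
      (tripR_antitone (hmono _ (hcb.trans hba).le)).dual_left (OrderDual.toDual q)
      (OrderDual.toDual q')

end BlockLayout

/-- correctness of the reduction from Betweenness. The instance consisting of
the ordering gadget `(G1, G2)` on levels `l_1, l_2` (vertices `u_{i,j}`, `i < k`, `j < n`, on
`l_1`; vertices `v_{i,j}`, `i < k-1`, `j < n`, and `x_i, y_i`, `i < k`, on `l_2`) together with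
the triplet gadgets `T_i` (graph `G3`) admits linear orders on the two levels making each of
`G1`, `G2`, `G3` crossing-free, iff the Betweenness instance `(S, X)` with
`S = {0,…,n-1}` and `X = {(a i, b i, c i) : i < k}` is satisfiable. -/
theorem betweenness_reduction
    (n k : ℕ) (a b c : ℕ → ℕ)
    (ha : ∀ i, i < k → a i < n) (hb : ∀ i, i < k → b i < n) (hc : ∀ i, i < k → c i < n)
    (hdis : ∀ i, i < k → a i ≠ b i ∧ b i ≠ c i ∧ a i ≠ c i) :
    (∃ (σu σv : ℕ → ℕ → ℝ) (σx σy : ℕ → ℝ),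
      -- all level-1 positions distinct
      (∀ i j i' j', i < k → j < n → i' < k → j' < n →
        σu i j = σu i' j' → (i, j) = (i', j')) ∧
      -- all level-2 positions distinct
      (∀ i j i' j', i < k - 1 → j < n → i' < k - 1 → j' < n →
        σv i j = σv i' j' → (i, j) = (i', j')) ∧
      (∀ i i', i < k → i' < k → σx i = σx i' → i = i') ∧
      (∀ i i', i < k → i' < k → σy i = σy i' → i = i') ∧
      (∀ i i', i < k → i' < k → σx i ≠ σy i') ∧
      (∀ i i' j, i < k → i' < k - 1 → j < n → σx i ≠ σv i' j ∧ σy i ≠ σv i' j) ∧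
      -- G1 has edges (u_{i,j}, v_{i,j}); crossing-free
      (∀ i j i' j', i < k - 1 → j < n → i' < k - 1 → j' < n →
        ¬ Cross (σu i j) (σv i j) (σu i' j') (σv i' j')) ∧
      -- G2 has edges (u_{i+1,j}, v_{i,j}); crossing-free
      (∀ i j i' j', i < k - 1 → j < n → i' < k - 1 → j' < n →
        ¬ Cross (σu (i + 1) j) (σv i j) (σu (i' + 1) j') (σv i' j')) ∧
      -- G3 consists of the triplet gadgets; crossing-free
      (∀ i q i' q', i < k → q < 4 → i' < k → q' < 4 → (i, q) ≠ (i', q') →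
        ¬ Cross (tripL σu a b c i q) (tripR σx σy i q)
                (tripL σu a b c i' q') (tripR σx σy i' q')))
    ↔
    (∃ p : ℕ → ℝ,
      (∀ j j', j < n → j' < n → p j = p j' → j = j') ∧
      (∀ i, i < k →
        (p (a i) < p (b i) ∧ p (b i) < p (c i)) ∨
        (p (c i) < p (b i) ∧ p (b i) < p (a i)))) := by
  constructor
  · rintro ⟨σu, σv, σx, σy, hu, hv, -, -, hxy, -, hG1, hG2, hG3⟩
    rcases Nat.eq_zero_or_pos k with rfl | hk
    · exact ⟨(↑), fun _ _ _ _ h => Nat.cast_injective h, fun i hi => (i.not_lt_zero hi).elim⟩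
    have hrow (i) (hi : i < k) : (Iio n).InjOn (σu i) :=
      fun j hj j' hj' h => congrArg Prod.snd (hu i j i j' hi hj hi hj' h)
    have hagree := ordering_gadget_lt_iff hrow
      (fun i hi j hj j' hj' h => congrArg Prod.snd (hv i j i j' hi hj hi hj' h))
      (fun i hi j hj j' hj' => hG1 i j i j' hi hj hi hj')
      (fun i hi j hj j' hj' => hG2 i j i j' hi hj hi hj')
    refine ⟨σu 0, fun j j' hj hj' => @hrow 0 hk j hj j' hj', fun i hi => ?_⟩
    have hai := ha i hi; have hbi := hb i hi; have hci := hc i hi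
    have hbet := between_of_not_cross ((hrow i hi).ne hai hbi (hdis i hi).1)
      ((hrow i hi).ne hbi hci (hdis i hi).2.1) (hxy i i hi hi)
      (hG3 i 0 i 2 hi (by norm_num) hi (by norm_num) (by simp))
      (hG3 i 1 i 3 hi (by norm_num) hi (by norm_num) (by simp))
    rwa [hagree i hi _ hai _ hbi, hagree i hi _ hbi _ hci, hagree i hi _ hci _ hbi,
      hagree i hi _ hbi _ hai] at hbet
  · rintro ⟨p, hinj, hbet⟩
    have hp : (Iio n).InjOn p := fun j hj j' hj' => hinj j j' hj hj'
    refine ⟨fun i j => blockPos i (p j), fun i j => blockPos i (p j),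
      fun i => blockPos (k + i) (p (a i)), fun i => blockPos (k + i) (p (c i)),
      ?_, ?_, ?_, ?_, ?_, ?_, ?_, ?_, ?_⟩
    · exact fun i j i' j' _ hj _ hj' => prod_eq_of_blockPos_eq hp hj hj'
    · exact fun i j i' j' _ hj _ hj' => prod_eq_of_blockPos_eq hp hj hj'
    · exact fun i i' _ _ h => Nat.add_left_cancel (blockPos_inj.1 h).1
    · exact fun i i' _ _ h => Nat.add_left_cancel (blockPos_inj.1 h).1
    · intro i i' hi _ h
      obtain ⟨hii, hac⟩ := blockPos_inj.1 h
      cases Nat.add_left_cancel hii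
      exact (hbet i hi).elim (fun h => (h.1.trans h.2).ne hac) (fun h => (h.1.trans h.2).ne' hac)
    · intro i i' j _ hi' _
      constructor <;> intro h <;> have := (blockPos_inj.1 h).1 <;> omega
    · exact fun i j i' j' _ _ _ _ => not_cross_of_monotone monotone_id monotone_id _ _
    · intro i j i' j' _ _ _ _
      simp only [blockPos_succ]
      exact not_cross_of_monotone (L := (· + 1)) (monotone_id.add_const 1) monotone_id _ _
    · intro i q i' q' hi _ _ _ _
      rcases lt_trichotomy i i' with h | rfl | h
      · exact not_cross_blockPos_triplets_of_lt h q q'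
      · exact not_cross_blockPos_triplet (hbet i hi) q q'
      · exact cross_comm.not.1 (not_cross_blockPos_triplets_of_lt h q' q)
end

section
/- The instance I*(G) of Simultaneous PQ-Ordering constructed from a proper level graph G is 2-fixed: in the DAG I^∪(G) where every PQ-tree is either a source with exactly two children or a sink with exactly two parents, every P-node μ of every PQ-tree satisfies fixed(μ) ≤ 2, where fixed(μ) = ω + Σ_{i=1}^{r}(fixed(μ_i) − 1), ω is the number of children of the tree fixing μ, T_1,…,T_r are the parents of the tree containing μ, and μ_i is the unique node of T_i fixed by μ. -/
/-- the instance `I*(G)` of Simultaneous PQ-Ordering constructed from a proper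
level graph is 2-fixed. Abstractly: in a DAG of PQ-trees where the fixedness of every P-node
`μ` satisfies the recursion `fixed(μ) = ω(μ) + Σ_i (fixed(μ_i) - 1)` over the counterparts
`μ_i` of `μ` in the parent trees, and where every node belongs either to a source tree (no
parents, and at most `ω ≤ 2` children fixing it) or to a sink tree (`ω = 0` and exactly two
parent counterparts, each belonging to a source with `ω ≤ 2`), every P-node has fixedness at
most `2`. -/
theorem instance_is_two_fixed
    {N : Type*} (parents : N → List N) (omega fixedVal : N → ℕ)
    (hrec : ∀ μ, fixedVal μ = omega μ + ((parents μ).map (fun ν => fixedVal ν - 1)).sum)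
    (hstruct : ∀ μ,
      (parents μ = [] ∧ omega μ ≤ 2) ∨
      (omega μ = 0 ∧ (parents μ).length = 2 ∧
        ∀ ν ∈ parents μ, parents ν = [] ∧ omega ν ≤ 2)) :
    ∀ μ, fixedVal μ ≤ 2 := by
  intro μ
  rcases hstruct μ with ⟨hp, hw⟩ | ⟨hw, hlen, hpar⟩
  · rw [hrec μ, hp]; simpa using hw
  · match hl : parents μ, hlen with
    | [a, b], _ =>
      rw [hrec μ, hw, hl]
      rw [hl] at hpar
      have ha := hpar a (by simp)
      have hb := hpar b (by simp)
      have hfa : fixedVal a ≤ 2 := by rw [hrec a, ha.1]; simpa using ha.2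
      have hfb : fixedVal b ≤ 2 := by rw [hrec b, hb.1]; simpa using hb.2
      simp only [List.map_cons, List.map_nil, List.sum_cons, List.sum_nil]
      omega
end
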